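/- arXiv:2212.13234 — 6 statements merged into one kernel-verified Lean document; each statement's English description precedes it below -/
import Mathlib

section
/- If x ∈ [0,1) is not a dyadic rational (i.e. 2^n x is never an integer) and the limit L := lim_{n→∞} (1/n)∑_{k=0}^{n-1} log|cos(π 2^k x)| exists in [−∞, 0], then L = −log 2. -/
open Real Filter

lemma spos (x : ℝ) (hnd : ∀ n : ℕ, ¬ ∃ m : ℤ, (2:ℝ)^n * x = (m : ℝ)) (n : ℕ) :
    0 < |Real.sin (Real.pi * (2^n * x))| := by
  rw [abs_pos]
  intro h
  rw [Real.sin_eq_zero_iff] at h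
  obtain ⟨m, hm⟩ := h
  have h2 : Real.pi * (m:ℝ) = Real.pi * (2^n * x) := by linarith [hm]
  exact hnd n ⟨m, (mul_left_cancel₀ Real.pi_ne_zero h2).symm⟩

lemma key (x : ℝ) (hnd : ∀ n : ℕ, ¬ ∃ m : ℤ, (2:ℝ)^n * x = (m : ℝ)) (N : ℕ)
    (h : ∀ n, N ≤ n → |Real.sin (Real.pi * (2^n * x))| < 1/2) : False := by
  set s : ℕ → ℝ := fun n => |Real.sin (Real.pi * (2^n * x))| with hs
  have hpos : ∀ n, 0 < s n := spos x hnd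
  have grow : ∀ m : ℕ, (3/2:ℝ)^m * s N ≤ s (N + m) := by
    intro m
    induction m with
    | zero => simp
    | succ m ih =>
      have hlt : s (N + m) < 1/2 := h _ (Nat.le_add_right N m)
      set θ := Real.pi * (2^(N+m) * x) with hθ
      have hdb : Real.pi * (2^(N+m+1) * x) = 2 * θ := by rw [hθ]; ring
      have hcos : (3/4:ℝ) ≤ |Real.cos θ| := by
        have h1 : Real.cos θ ^ 2 = 1 - Real.sin θ ^ 2 := Real.cos_sq' θ
        have h2 : |Real.sin θ| < 1/2 := hlt
        nlinarith [sq_abs (Real.cos θ), sq_abs (Real.sin θ), abs_nonneg (Real.cos θ),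
          abs_nonneg (Real.sin θ)]
      have hstep : (3/2:ℝ) * s (N + m) ≤ s (N + m + 1) := by
        have he : s (N + m + 1) = 2 * |Real.sin θ| * |Real.cos θ| := by
          show |Real.sin (Real.pi * (2^(N+m+1) * x))| = _
          rw [hdb, Real.sin_two_mul, abs_mul, abs_mul, abs_two]
        rw [he]
        nlinarith [hpos (N+m)]
      calc (3/2:ℝ)^(m+1) * s N = (3/2) * ((3/2:ℝ)^m * s N) := by ring
        _ ≤ (3/2) * s (N + m) := by nlinarith
        _ ≤ s (N + m + 1) := hstep
  obtain ⟨m, hm⟩ := pow_unbounded_of_one_lt ((1/2) / s N) (by norm_num : (1:ℝ) < 3/2)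
  have h1 : (1/2:ℝ) < (3/2)^m * s N := by
    rw [div_lt_iff₀ (hpos N)] at hm; linarith
  exact absurd (h (N + m) (Nat.le_add_right N m)) (by linarith [grow m])

theorem stmt4 (x : ℝ) (hx : x ∈ Set.Ico (0:ℝ) 1)
    (hnd : ∀ n : ℕ, ¬ ∃ m : ℤ, (2:ℝ)^n * x = (m : ℝ))
    (L : EReal) (hL : L ≤ 0)
    (hlim : Filter.Tendsto
      (fun n : ℕ => (((1 / n : ℝ) *
          ∑ k ∈ Finset.range n, Real.log |Real.cos (Real.pi * (2^k * x))| : ℝ) : EReal))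
      Filter.atTop (nhds L)) :
    L = ((-Real.log 2 : ℝ) : EReal) := by
  set s : ℕ → ℝ := fun n => |Real.sin (Real.pi * (2^n * x))| with hs
  have hpos : ∀ n, 0 < s n := spos x hnd
  set g : ℕ → ℝ := fun k => Real.log (s k) - k * Real.log 2 with hg
  have hcosne : ∀ k : ℕ, |Real.cos (Real.pi * (2^k * x))| ≠ 0 := by
    intro k hc
    have h0 : Real.cos (Real.pi * (2^k * x)) = 0 := abs_eq_zero.mp hc
    have : s (k+1) = 0 := by
      show |Real.sin (Real.pi * (2^(k+1) * x))| = 0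
      have hdb : Real.pi * (2^(k+1) * x) = 2 * (Real.pi * (2^k * x)) := by ring
      rw [hdb, Real.sin_two_mul, h0]
      simp
    exact absurd this (ne_of_gt (hpos (k+1)))
  have hstep : ∀ k : ℕ, Real.log |Real.cos (Real.pi * (2^k * x))| = g (k+1) - g k := by
    intro k
    have hmul : s (k+1) = 2 * (s k * |Real.cos (Real.pi * (2^k * x))|) := by
      show |Real.sin (Real.pi * (2^(k+1) * x))| = _
      have hdb : Real.pi * (2^(k+1) * x) = 2 * (Real.pi * (2^k * x)) := by ring
      rw [hdb, Real.sin_two_mul, abs_mul, abs_mul, abs_two]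
      ring
    have h1 : Real.log (s (k+1)) = Real.log 2 + (Real.log (s k) +
        Real.log |Real.cos (Real.pi * (2^k * x))|) := by
      rw [hmul, Real.log_mul (by norm_num) (mul_ne_zero (ne_of_gt (hpos k)) (hcosne k)),
        Real.log_mul (ne_of_gt (hpos k)) (hcosne k)]
    rw [hg]
    simp only []
    rw [h1]
    push_cast
    ring
  have hsum : ∀ n : ℕ, ∑ k ∈ Finset.range n, Real.log |Real.cos (Real.pi * (2^k * x))| =
      (Real.log (s n) - n * Real.log 2) - Real.log (s 0) := by
    intro n
    calc ∑ k ∈ Finset.range n, Real.log |Real.cos (Real.pi * (2^k * x))|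
        = ∑ k ∈ Finset.range n, (g (k+1) - g k) := Finset.sum_congr rfl fun k _ => hstep k
      _ = g n - g 0 := Finset.sum_range_sub g n
      _ = (Real.log (s n) - n * Real.log 2) - Real.log (s 0) := by rw [hg]; simp
  set u : ℕ → ℝ := fun n => (1/n : ℝ) * Real.log (s n) with hu
  have heq : ∀ n : ℕ, 1 ≤ n → ((1 / n : ℝ) *
      ∑ k ∈ Finset.range n, Real.log |Real.cos (Real.pi * (2^k * x))|) =
      u n - Real.log 2 - (1/n) * Real.log (s 0) := by
    intro n hn
    have hn0 : (n:ℝ) ≠ 0 := Nat.cast_ne_zero.mpr (by omega)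
    rw [hsum n, hu]
    field_simp
    try ring
  have contra : ∀ c : ℝ, c < 0 → (∀ᶠ n in atTop, u n ≤ c) → False := by
    intro c hc hev
    have hs0 : Tendsto s atTop (nhds 0) := by
      have h1 : ∀ᶠ n in atTop, s n ≤ Real.exp (c * n) := by
        filter_upwards [hev, eventually_ge_atTop 1] with n hn hn1
        have hn0 : (0:ℝ) < n := by exact_mod_cast hn1
        have h2 : Real.log (s n) ≤ c * n := by
          have h3 : (1/n : ℝ) * Real.log (s n) ≤ c := hn
          calc Real.log (s n) = n * ((1/n) * Real.log (s n)) := by field_simp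
            _ ≤ n * c := by nlinarith
            _ = c * n := by ring
        calc s n = Real.exp (Real.log (s n)) := (Real.exp_log (hpos n)).symm
          _ ≤ Real.exp (c * n) := Real.exp_le_exp.mpr h2
      have h2 : Tendsto (fun n : ℕ => Real.exp (c * n)) atTop (nhds 0) := by
        apply Real.tendsto_exp_atBot.comp
        apply Tendsto.const_mul_atTop_of_neg hc
        exact tendsto_natCast_atTop_atTop
      apply squeeze_zero' (by filter_upwards with n; exact (hpos n).le) h1 h2
    have hev2 : ∀ᶠ n in atTop, s n < 1/2 :=
      hs0.eventually (eventually_lt_nhds (by norm_num : (0:ℝ) < 1/2))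
    obtain ⟨N, hN⟩ := hev2.exists_forall_of_atTop
    exact key x hnd N hN
  have hule : ∀ n : ℕ, u n ≤ 0 := by
    intro n
    rw [hu]
    apply mul_nonpos_of_nonneg_of_nonpos
    · positivity
    · exact Real.log_nonpos (abs_nonneg _) (abs_sin_le_one _)
  have hcorr : Tendsto (fun n : ℕ => (1/n : ℝ) * Real.log (s 0)) atTop (nhds 0) := by
    have := tendsto_one_div_atTop_nhds_zero_nat.mul_const (Real.log (s 0))
    simpa using this
  induction L with
  | bot =>
    exfalso
    rw [EReal.tendsto_nhds_bot_iff_real] at hlim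
    have hev : ∀ᶠ n in atTop, u n ≤ -1 := by
      have h1 := hlim (-1 - Real.log 2 - 1)
      filter_upwards [h1, hcorr.eventually (eventually_le_nhds (by norm_num : (0:ℝ) < 1)),
        eventually_ge_atTop 1] with n hn hcn hn1
      have hn' : ((1 / n : ℝ) *
          ∑ k ∈ Finset.range n, Real.log |Real.cos (Real.pi * (2^k * x))|)
          < -1 - Real.log 2 - 1 := by exact_mod_cast hn
      rw [heq n hn1] at hn'
      linarith
    exact contra (-1) (by norm_num) hev
  | coe r =>
    rw [EReal.tendsto_coe] at hlim
    have hulim : Tendsto u atTop (nhds (r + Real.log 2)) := by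
      have h1 : Tendsto (fun n : ℕ => ((1 / n : ℝ) *
          ∑ k ∈ Finset.range n, Real.log |Real.cos (Real.pi * (2^k * x))|)
          + Real.log 2 + (1/n) * Real.log (s 0)) atTop (nhds (r + Real.log 2 + 0)) :=
        (hlim.add_const _).add hcorr
      simp only [add_zero] at h1
      apply h1.congr'
      filter_upwards [eventually_ge_atTop 1] with n hn
      rw [heq n hn]; ring
    have hc : r + Real.log 2 ≤ 0 := le_of_tendsto hulim (by filter_upwards with n; exact hule n)
    rcases lt_or_eq_of_le hc with hlt | heq0
    · exfalso
      apply contra ((r + Real.log 2)/2) (by linarith)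
      exact hulim.eventually (eventually_le_nhds (by linarith))
    · have hr : r = -Real.log 2 := by linarith
      rw [hr]
  | top => simp at hL
end

section
/- There exist constants 0 < C₁ < C₂ < ∞ such that for all sufficiently small δ > 0, the L¹-modulus of continuity of f(x) = log|sin(πx)| on the circle satisfies C₁ δ |log δ| ≤ Ω₁(f; δ) ≤ C₂ δ |log δ|. -/
/-!
Write `f x = log |sin (π x)| ≤ 0`. Integrated shifted differences telescope:
`∫ₐᶜ (f (x + δ) - f x) = ∫_c^{c+δ} f - ∫ₐ^{a+δ} f`. As `f` increases on `(0, 1/2]` up to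
`f (1/2) = 0` and then decreases, the increasing stretch `[0, 1/2 - δ]` alone gives
`Ω₁(f; δ) ≥ -∫₀^δ f - δ log 2`, while the window around the peak and the wrap-around window at `1`
each cost at most `-2 ∫₀^δ f`, so that `Ω₁(f; δ) ≤ -4 ∫₀^δ f`. Finally `2x ≤ sin (π x) ≤ π x` on
`[0, 1/2]` gives `∫₀^δ f = δ log δ + O(δ)`.
-/

open Real MeasureTheory Set intervalIntegral
open scoped Interval

section Shift

variable {g : ℝ → ℝ}

lemma intervalIntegrable_comp_add_right_of_forall (hg : ∀ s t, IntervalIntegrable g volume s t)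
    (δ s t : ℝ) : IntervalIntegrable (fun x => g (x + δ)) volume s t := by
  simpa using (hg (s + δ) (t + δ)).comp_add_right δ

lemma intervalIntegrable_abs_comp_add_sub (hg : ∀ s t, IntervalIntegrable g volume s t)
    (δ s t : ℝ) : IntervalIntegrable (fun x => |g (x + δ) - g x|) volume s t :=
  ((intervalIntegrable_comp_add_right_of_forall hg δ s t).sub (hg s t)).abs

theorem integral_comp_add_sub (hg : ∀ s t, IntervalIntegrable g volume s t) (a c δ : ℝ) :
    ∫ x in a..c, (g (x + δ) - g x) = (∫ x in c..c + δ, g x) - ∫ x in a..a + δ, g x := by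
  rw [integral_sub (intervalIntegrable_comp_add_right_of_forall hg δ a c) (hg a c),
    integral_comp_add_right, integral_interval_sub_interval_comm (hg _ _) (hg _ _) (hg _ _),
    integral_symm a, integral_symm c]
  ring

theorem integral_abs_comp_add_sub_le_of_unimodal {a m b δ : ℝ}
    (hg : ∀ s t, IntervalIntegrable g volume s t)
    (hmono : MonotoneOn g (Ioc a m)) (hanti : AntitoneOn g (Ico m b))
    (hδ : 0 ≤ δ) (ham : a + δ ≤ m) (hmb : m + δ ≤ b) :
    ∫ x in a..b - δ, |g (x + δ) - g x| ≤
      2 * δ * g m - (∫ x in a..a + δ, g x) - ∫ x in b - δ..b, g x := by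
  have hF := intervalIntegrable_abs_comp_add_sub hg δ
  have hG := intervalIntegrable_comp_add_right_of_forall hg δ
  have hD : ∀ s t, IntervalIntegrable (fun x => g (x + δ) - g x) volume s t :=
    fun s t => (hG s t).sub (hg s t)
  have hup : ∫ x in a..m - δ, |g (x + δ) - g x| ≤
      (∫ x in m - δ..m, g x) - ∫ x in a..a + δ, g x := by
    rw [← sub_add_cancel m δ, add_sub_cancel_right, ← integral_comp_add_sub hg]
    refine integral_mono_on_of_le_Ioo (by linarith) (hF _ _) (hD _ _) fun x hx => ?_
    refine (abs_of_nonneg (sub_nonneg.2 (hmono ?_ ?_ (by linarith)))).le <;>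
      constructor <;> linarith [hx.1, hx.2]
  have hpeak : ∫ x in m - δ..m, |g (x + δ) - g x| ≤
      2 * δ * g m - (∫ x in m - δ..m, g x) - ∫ x in m..m + δ, g x := by
    calc ∫ x in m - δ..m, |g (x + δ) - g x|
        ≤ ∫ x in m - δ..m, ((g m - g x) + (g m - g (x + δ))) := by
          refine integral_mono_on_of_le_Ioo (by linarith) (hF _ _)
            ((intervalIntegrable_const.sub (hg _ _)).add (intervalIntegrable_const.sub (hG _ _)))
            fun x hx => ?_
          have hgx : g x ≤ g m := hmono ⟨by linarith [hx.1], hx.2.le⟩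
            ⟨by linarith [hx.1, hx.2], le_rfl⟩ hx.2.le
          have hxδ : g (x + δ) ≤ g m := hanti ⟨le_rfl, by linarith [hx.1, hx.2]⟩
            ⟨by linarith [hx.1], by linarith [hx.2]⟩ (by linarith [hx.1])
          exact abs_sub_le_iff.2 ⟨by linarith, by linarith⟩
      _ = _ := by
          rw [integral_add (intervalIntegrable_const.sub (hg _ _))
              (intervalIntegrable_const.sub (hG _ _)),
            integral_sub intervalIntegrable_const (hg _ _),
            integral_sub intervalIntegrable_const (hG _ _), intervalIntegral.integral_const,
            integral_comp_add_right, sub_add_cancel, smul_eq_mul]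
          ring
  have hdown : ∫ x in m..b - δ, |g (x + δ) - g x| ≤
      (∫ x in m..m + δ, g x) - ∫ x in b - δ..b, g x := by
    calc ∫ x in m..b - δ, |g (x + δ) - g x|
        ≤ ∫ x in m..b - δ, -(g (x + δ) - g x) := by
          refine integral_mono_on_of_le_Ioo (by linarith) (hF _ _) (hD _ _).neg fun x hx => ?_
          refine (abs_of_nonpos (sub_nonpos.2 (hanti ?_ ?_ (by linarith)))).le <;>
            constructor <;> linarith [hx.1, hx.2]
      _ = _ := by
          rw [intervalIntegral.integral_neg, integral_comp_add_sub hg, sub_add_cancel, neg_sub]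
  rw [← integral_add_adjacent_intervals (hF a (m - δ)) (hF (m - δ) (b - δ)),
    ← integral_add_adjacent_intervals (hF (m - δ) m) (hF m (b - δ))]
  linarith

end Shift

lemma integral_log_const_mul {c : ℝ} (hc : c ≠ 0) (δ : ℝ) :
    ∫ x in (0:ℝ)..δ, log (c * x) = δ * log (c * δ) - δ := by
  rw [integral_comp_mul_left (fun x => log x) hc, integral_log, smul_eq_mul]
  field_simp
  ring

/-- `Ω₁(f; δ)`, for `f` regarded as `1`-periodic. -/
noncomputable def l1Modulus (f : ℝ → ℝ) (δ : ℝ) : ℝ :=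
  ∫ x in (0:ℝ)..1, |f (x + δ) - f x|

noncomputable def logSinPi (x : ℝ) : ℝ := log |sin (π * x)|

lemma intervalIntegrable_logSinPi (a b : ℝ) : IntervalIntegrable logSinPi volume a b := by
  have : AnalyticOnNhd ℝ (fun x => sin (π * x)) [[a, b]] := fun x _ => by fun_prop
  unfold logSinPi
  simpa [Function.comp_def, log_abs] using this.meromorphicOn.intervalIntegrable_log

lemma logSinPi_nonpos (x : ℝ) : logSinPi x ≤ 0 :=
  log_nonpos (abs_nonneg _) (abs_sin_le_one _)

lemma logSinPi_add_one (x : ℝ) : logSinPi (x + 1) = logSinPi x := by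
  simp [logSinPi, mul_add, sin_add_pi]

lemma logSinPi_one_sub (x : ℝ) : logSinPi (1 - x) = logSinPi x := by
  simp [logSinPi, mul_sub, sin_pi_sub]

lemma logSinPi_half : logSinPi (1 / 2) = 0 := by
  rw [logSinPi, mul_one_div, sin_pi_div_two, abs_one, log_one]

lemma two_mul_le_sin_pi_mul {x : ℝ} (h0 : 0 ≤ x) (h1 : x ≤ 1 / 2) :
    2 * x ≤ sin (π * x) := by
  calc 2 * x = 2 / π * (π * x) := by field_simp
    _ ≤ sin (π * x) := mul_le_sin (by positivity) (by nlinarith [pi_pos])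

lemma log_two_mul_le_logSinPi {x : ℝ} (h0 : 0 < x) (h1 : x ≤ 1 / 2) :
    log (2 * x) ≤ logSinPi x := by
  have h := two_mul_le_sin_pi_mul h0.le h1
  exact log_le_log (by positivity) (h.trans (le_abs_self _))

lemma logSinPi_le_log_pi_mul {x : ℝ} (h0 : 0 < x) (h1 : x ≤ 1 / 2) :
    logSinPi x ≤ log (π * x) := by
  have h := two_mul_le_sin_pi_mul h0.le h1
  exact log_le_log ((by positivity : 0 < 2 * x).trans_le (h.trans (le_abs_self _)))
    (abs_sin_le_abs.trans (abs_of_pos (by positivity)).le)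

lemma monotoneOn_logSinPi : MonotoneOn logSinPi (Ioc 0 (1 / 2)) := by
  intro x hx y hy hxy
  have hsx := two_mul_le_sin_pi_mul hx.1.le hx.2
  have hsy := two_mul_le_sin_pi_mul hy.1.le hy.2
  refine log_le_log (by linarith [hx.1, le_abs_self (sin (π * x))]) ?_
  rw [abs_of_pos (by linarith [hx.1]), abs_of_pos (by linarith [hy.1])]
  exact sin_le_sin_of_le_of_le_pi_div_two (by nlinarith [pi_pos, hx.1])
    (by nlinarith [pi_pos, hy.2]) (by gcongr)

lemma antitoneOn_logSinPi : AntitoneOn logSinPi (Ico (1 / 2) 1) := by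
  intro x hx y hy hxy
  rw [← logSinPi_one_sub x, ← logSinPi_one_sub y]
  exact monotoneOn_logSinPi ⟨by linarith [hy.2], by linarith [hy.1]⟩
    ⟨by linarith [hx.2], by linarith [hx.1]⟩ (by linarith)

lemma integral_logSinPi_le {δ : ℝ} (h0 : 0 ≤ δ) (h1 : δ ≤ 1 / 2) :
    ∫ x in (0:ℝ)..δ, logSinPi x ≤ δ * log (π * δ) - δ := by
  have : AnalyticOnNhd ℝ (fun x => π * x) [[0, δ]] := fun x _ => by fun_prop
  rw [← integral_log_const_mul pi_ne_zero]
  exact integral_mono_on_of_le_Ioo h0 (intervalIntegrable_logSinPi _ _)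
    this.meromorphicOn.intervalIntegrable_log
    fun x hx => logSinPi_le_log_pi_mul hx.1 (by linarith [hx.2])

lemma le_integral_logSinPi {δ : ℝ} (h0 : 0 ≤ δ) (h1 : δ ≤ 1 / 2) :
    δ * log (2 * δ) - δ ≤ ∫ x in (0:ℝ)..δ, logSinPi x := by
  have : AnalyticOnNhd ℝ (fun x => 2 * x) [[0, δ]] := fun x _ => by fun_prop
  rw [← integral_log_const_mul two_ne_zero]
  exact integral_mono_on_of_le_Ioo h0 this.meromorphicOn.intervalIntegrable_log
    (intervalIntegrable_logSinPi _ _)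
    fun x hx => log_two_mul_le_logSinPi hx.1 (by linarith [hx.2])

lemma neg_integral_logSinPi_sub_le_l1Modulus {δ : ℝ} (h0 : 0 ≤ δ) (h1 : δ ≤ 1 / 4) :
    -(∫ x in (0:ℝ)..δ, logSinPi x) - δ * log 2 ≤ l1Modulus logSinPi δ := by
  have hpeak : -(δ * log 2) ≤ ∫ x in 1 / 2 - δ..1 / 2, logSinPi x := by
    have h := integral_mono_on_of_le_Ioo (a := 1 / 2 - δ) (b := 1 / 2) (by linarith)
      intervalIntegrable_const (intervalIntegrable_logSinPi _ _) fun x hx =>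
        calc -log 2 = log (1 / 2) := by rw [one_div, log_inv]
          _ ≤ log (2 * x) := log_le_log (by norm_num) (by linarith [hx.1])
          _ ≤ logSinPi x := log_two_mul_le_logSinPi (by linarith [hx.1]) hx.2.le
    rw [intervalIntegral.integral_const, smul_eq_mul] at h
    linarith
  calc -(∫ x in (0:ℝ)..δ, logSinPi x) - δ * log 2
      ≤ ∫ x in (0:ℝ)..1 / 2 - δ, (logSinPi (x + δ) - logSinPi x) := by
        rw [integral_comp_add_sub intervalIntegrable_logSinPi, sub_add_cancel, zero_add]
        linarith
    _ ≤ ∫ x in (0:ℝ)..1 / 2 - δ, |logSinPi (x + δ) - logSinPi x| :=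
        integral_mono_on (by linarith)
          ((intervalIntegrable_comp_add_right_of_forall intervalIntegrable_logSinPi δ _ _).sub
            (intervalIntegrable_logSinPi _ _))
          (intervalIntegrable_abs_comp_add_sub intervalIntegrable_logSinPi δ _ _)
          fun x _ => le_abs_self _
    _ ≤ l1Modulus logSinPi δ :=
        integral_mono_interval le_rfl (by linarith) (by linarith)
          (Filter.Eventually.of_forall fun _ => abs_nonneg _)
          (intervalIntegrable_abs_comp_add_sub intervalIntegrable_logSinPi δ _ _)

lemma l1Modulus_logSinPi_le {δ : ℝ} (h0 : 0 ≤ δ) (h1 : δ ≤ 1 / 2) :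
    l1Modulus logSinPi δ ≤ -4 * ∫ x in (0:ℝ)..δ, logSinPi x := by
  have hF := intervalIntegrable_abs_comp_add_sub intervalIntegrable_logSinPi δ
  have hsymm : ∫ x in 1 - δ..1, logSinPi x = ∫ x in (0:ℝ)..δ, logSinPi x := by
    simpa [logSinPi_one_sub] using (integral_comp_sub_left logSinPi 1 (a := 0) (b := δ)).symm
  have hper : ∫ x in (1:ℝ)..1 + δ, logSinPi x = ∫ x in (0:ℝ)..δ, logSinPi x := by
    simpa [logSinPi_add_one, add_comm] using
      (integral_comp_add_right logSinPi 1 (a := 0) (b := δ)).symm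
  have hS : ∀ s t, IntervalIntegrable (fun x => logSinPi (x + δ) + logSinPi x) volume s t :=
    fun s t => (intervalIntegrable_comp_add_right_of_forall intervalIntegrable_logSinPi δ s t).add
      (intervalIntegrable_logSinPi s t)
  have hmain := integral_abs_comp_add_sub_le_of_unimodal intervalIntegrable_logSinPi
    monotoneOn_logSinPi antitoneOn_logSinPi h0 (by linarith) (by linarith)
  rw [logSinPi_half, zero_add, hsymm] at hmain
  have hwrap : ∫ x in 1 - δ..1, |logSinPi (x + δ) - logSinPi x| ≤
      -2 * ∫ x in (0:ℝ)..δ, logSinPi x := by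
    calc ∫ x in 1 - δ..1, |logSinPi (x + δ) - logSinPi x|
        ≤ ∫ x in 1 - δ..1, -(logSinPi (x + δ) + logSinPi x) := by
          refine integral_mono_on (by linarith) (hF _ _) (hS _ _).neg
            fun x _ => abs_sub_le_iff.2 ⟨?_, ?_⟩ <;>
            linarith [logSinPi_nonpos x, logSinPi_nonpos (x + δ)]
      _ = _ := by
          rw [intervalIntegral.integral_neg, integral_add
              (intervalIntegrable_comp_add_right_of_forall intervalIntegrable_logSinPi δ _ _)
              (intervalIntegrable_logSinPi _ _),
            integral_comp_add_right, sub_add_cancel, hper, hsymm]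
          ring
  rw [l1Modulus, ← integral_add_adjacent_intervals (hF 0 (1 - δ)) (hF (1 - δ) 1)]
  linarith

theorem stmt8 : ∃ C₁ C₂ : ℝ, 0 < C₁ ∧ C₁ < C₂ ∧
    ∃ δ₀ > (0:ℝ), ∀ δ : ℝ, 0 < δ → δ < δ₀ →
      C₁ * (δ * |Real.log δ|) ≤
        (∫ x in (0:ℝ)..1,
          |Real.log (abs (Real.sin (Real.pi * (x + δ)))) -
            Real.log (abs (Real.sin (Real.pi * x)))|) ∧
      (∫ x in (0:ℝ)..1,
          |Real.log (abs (Real.sin (Real.pi * (x + δ)))) -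
            Real.log (abs (Real.sin (Real.pi * x)))|) ≤
        C₂ * (δ * |Real.log δ|) := by
  refine ⟨1 / 2, 5, by norm_num, by norm_num, exp (-4), exp_pos _, fun δ hδ0 hδ => ?_⟩
  change 1 / 2 * (δ * |log δ|) ≤ l1Modulus logSinPi δ ∧
    l1Modulus logSinPi δ ≤ 5 * (δ * |log δ|)
  have hL : 4 < -log δ := by linarith [(log_lt_iff_lt_exp hδ0).2 hδ]
  have hδ4 : δ ≤ 1 / 4 := by
    refine hδ.le.trans ?_
    rw [exp_neg, one_div]
    exact inv_anti₀ (by norm_num) (by linarith [add_one_le_exp 4])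
  have hlow := neg_integral_logSinPi_sub_le_l1Modulus hδ0.le hδ4
  have hup := l1Modulus_logSinPi_le hδ0.le (by linarith)
  have hI₁ := integral_logSinPi_le hδ0.le (by linarith)
  have hI₂ := le_integral_logSinPi hδ0.le (by linarith)
  rw [log_mul pi_ne_zero hδ0.ne'] at hI₁
  rw [log_mul two_ne_zero hδ0.ne'] at hI₂
  have hlog2 : 0 ≤ log 2 := log_nonneg one_le_two
  have hlogπ : log π + log 2 < 3 := by
    linarith [log_lt_sub_one_of_pos pi_pos (by linarith [pi_gt_three]), pi_lt_d2, log_two_lt_d9]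
  rw [abs_of_neg (by linarith : log δ < 0)]
  constructor <;> nlinarith
end

section
/- For each i, j ≥ 1 let Q_i^j = {x ∈ ℝ/ℤ : d(T^i x, x) ≤ 2^{−j}} where T(x) = 2x mod 1 and d is the circle distance. Then for any dyadic interval J = [m/2^i, (m+1)/2^i), the set J ∩ Q_i^j is contained in at most 3 intervals, each of length 2/(2^j(2^i − 1)). -/
/-!
With `D = 2^i - 1`, the distance from `T^i y` to `y` is the distance from `D y` to the nearest
integer `r = round (D y)`, and `|D y - r| ≤ ε` puts `y` within `ε / D` of `r / D`. As `y` runs over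
a dyadic interval of length `2^(-i)`, `D y` runs over an interval of length `1 - 2^(-i) < 1`, so
`r` takes at most two values: already two of the three centres suffice.
-/

/-- The doubling map on the circle `ℝ/ℤ`. -/
noncomputable def double : AddCircle (1:ℝ) → AddCircle (1:ℝ) := fun z => z + z

open Set

theorem Int.eq_ceil_or_eq_ceil_add_one_of_mem_Ico {a : ℝ} {r : ℤ} (hr : (r : ℝ) ∈ Ico a (a + 2)) :
    r = ⌈a⌉ ∨ r = ⌈a⌉ + 1 := by
  have hlo : ⌈a⌉ ≤ r := Int.ceil_le.mpr hr.1
  have hhi : r < ⌈a⌉ + 2 := by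
    have : (r : ℝ) < ⌈a⌉ + 2 := hr.2.trans_le (by linarith [Int.le_ceil a])
    exact_mod_cast this
  omega

theorem round_mul_mem_Ico {D s h y : ℝ} (hD : 0 ≤ D) (hDh : D * h < 1) (hy : y ∈ Icc s (s + h)) :
    (round (D * y) : ℝ) ∈ Ico (D * s - 1 / 2) (D * s - 1 / 2 + 2) := by
  have hround := abs_le.mp (abs_sub_round (D * y))
  have hlo : D * s ≤ D * y := mul_le_mul_of_nonneg_left hy.1 hD
  have hhi : D * y ≤ D * s + D * h := by nlinarith [hy.2]
  constructor <;> linarith [hround.1, hround.2]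

theorem AddCircle.dist_coe_div_le {p D : ℝ} (hD : 0 < D) (y : ℝ) (r : ℤ) :
    dist (y : AddCircle p) ((r / D : ℝ) : AddCircle p) ≤ |D * y - r| / D := by
  rw [dist_eq_norm, ← QuotientAddGroup.mk_sub]
  calc ‖((y - r / D : ℝ) : AddCircle p)‖ ≤ |y - r / D| := QuotientAddGroup.norm_mk_le_norm
    _ = |D * y - r| / D := by
      rw [← abs_of_pos hD, ← abs_div, abs_of_pos hD]
      congr 1
      field_simp

theorem double_iterate_coe (n : ℕ) (y : ℝ) :
    double^[n] (y : AddCircle (1:ℝ)) = ((2 ^ n * y : ℝ) : AddCircle (1:ℝ)) := by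
  induction n with
  | zero => simp
  | succ n ih =>
    rw [Function.iterate_succ_apply', ih, double, ← QuotientAddGroup.mk_add]
    ring_nf

theorem dist_double_iterate_coe (n : ℕ) (y : ℝ) :
    dist (double^[n] (y : AddCircle (1:ℝ))) y
      = |(2 ^ n - 1) * y - round ((2 ^ n - 1) * y)| := by
  rw [double_iterate_coe, dist_eq_norm, ← QuotientAddGroup.mk_sub, ← UnitAddCircle.norm_eq]
  ring_nf

theorem stmt10_general (i j : ℕ) (hi : 1 ≤ i) (m : ℕ) :
    ∃ c₁ c₂ c₃ : AddCircle (1:ℝ),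
      ∀ x : AddCircle (1:ℝ),
        (∃ y : ℝ, y ∈ Set.Ico ((m : ℝ) / 2^i) (((m : ℝ) + 1) / 2^i) ∧ x = (y : AddCircle (1:ℝ))) →
        dist (double^[i] x) x ≤ (2:ℝ)^(-(j:ℤ)) →
        dist x c₁ ≤ 1 / (2^j * (2^i - 1)) ∨ dist x c₂ ≤ 1 / (2^j * (2^i - 1)) ∨
          dist x c₃ ≤ 1 / (2^j * (2^i - 1)) := by
  set D : ℝ := 2 ^ i - 1 with hD_def
  have hD : 0 < D := by
    have : (2:ℝ) ≤ 2 ^ i := le_self_pow₀ one_le_two (by omega)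
    linarith
  set a : ℝ := D * (m / 2 ^ i) - 1 / 2
  refine ⟨((⌈a⌉ / D : ℝ) : AddCircle (1:ℝ)), (((⌈a⌉ + 1 : ℤ) / D : ℝ) : AddCircle (1:ℝ)),
    (((⌈a⌉ + 1 : ℤ) / D : ℝ) : AddCircle (1:ℝ)), ?_⟩
  rintro _ ⟨y, hy, rfl⟩ hdist
  rw [dist_double_iterate_coe] at hdist
  have hround : (round (D * y) : ℝ) ∈ Ico a (a + 2) := by
    refine round_mul_mem_Ico hD.le ?_ (Ico_subset_Icc_self (by rwa [add_div] at hy))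
    rw [hD_def, ← div_eq_mul_one_div, div_lt_one (by positivity)]
    linarith
  have hclose : ∀ r : ℤ, round (D * y) = r →
      dist (y : AddCircle (1:ℝ)) ((r / D : ℝ) : AddCircle (1:ℝ)) ≤ 1 / (2 ^ j * D) := by
    rintro r rfl
    calc _ ≤ |D * y - round (D * y)| / D := AddCircle.dist_coe_div_le hD y _
      _ ≤ (2:ℝ) ^ (-(j:ℤ)) / D := by gcongr
      _ = 1 / (2 ^ j * D) := by rw [zpow_neg, zpow_natCast, inv_eq_one_div, div_div]
  rcases Int.eq_ceil_or_eq_ceil_add_one_of_mem_Ico hround with h | h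
  · exact Or.inl (hclose _ h)
  · exact Or.inr (Or.inl (hclose _ h))

theorem stmt10 (i j : ℕ) (hi : 1 ≤ i) (hj : 1 ≤ j) (m : ℕ) (hm : m < 2^i) :
    ∃ c₁ c₂ c₃ : AddCircle (1:ℝ),
      ∀ x : AddCircle (1:ℝ),
        (∃ y : ℝ, y ∈ Set.Ico ((m : ℝ) / 2^i) (((m : ℝ) + 1) / 2^i) ∧ x = (y : AddCircle (1:ℝ))) →
        dist (double^[i] x) x ≤ (2:ℝ)^(-(j:ℤ)) →
        dist x c₁ ≤ 1 / (2^j * (2^i - 1)) ∨ dist x c₂ ≤ 1 / (2^j * (2^i - 1)) ∨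
          dist x c₃ ≤ 1 / (2^j * (2^i - 1)) :=
  stmt10_general i j hi m
end

section
/- For each K > 0, the set Y_K = {x ∈ ℝ/ℤ : liminf_{n→∞} (1/n) log₂ d(T^n x, x) < −K} has Hausdorff dimension at most 1/(K+1), where T(x) = 2x mod 1. Consequently, the set Y_∞ = {x : liminf_{n→∞} (1/n) log₂ d(T^n x, x) = −∞} has Hausdorff dimension zero. -/
/-!
If `d(Tⁿx, x) ≤ 2^{-Kn}`, then `‖(2ⁿ - 1) x‖ ≤ 2^{-Kn}` on `ℝ/ℤ`, so `x` lies within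
`2^{-Kn} / (2ⁿ - 1) ≈ 2^{-(K+1)n}` of one of the `2ⁿ - 1` points `j / (2ⁿ - 1)`. Every point of
`Y_K` lies in infinitely many of these families of balls, and for `d > 1/(K+1)` the series
`∑ₙ 2ⁿ (2^{-(K+1)n})^d` converges, so the Hausdorff–Cantelli lemma gives `μH[d] Y_K = 0`.
The set `Y_∞` is contained in every `Y_K`.
-/

open Filter MeasureTheory Metric Set
open scoped ENNReal Topology

theorem hausdorffMeasure_limsup_atTop_eq_zero {X : Type*} [EMetricSpace X] [MeasurableSpace X]
    [BorelSpace X] {ι : ℕ → Type*} [∀ n, Countable (ι n)] {d : ℝ} (hd : 0 < d)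
    (t : ∀ n, ι n → Set X) (hsum : ∑' n, ∑' i, ediam (t n i) ^ d ≠ ∞) :
    μH[d] (limsup (fun n => ⋃ i, t n i) atTop) = 0 := by
  set tail : ℕ → ℝ≥0∞ := fun N => ∑' m, ∑' i, ediam (t (m + N) i) ^ d
  have htail : Tendsto tail atTop (𝓝 0) :=
    ENNReal.tendsto_sum_nat_add (fun n => ∑' i, ediam (t n i) ^ d) hsum
  have hradius : Tendsto (fun N => tail N ^ d⁻¹) atTop (𝓝 0) := by
    simpa only [ENNReal.zero_rpow_of_pos (inv_pos.2 hd)] using htail.ennrpow_const d⁻¹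
  -- a single term of the tail sum already bounds the diameter, since `d > 0`
  have hdiam : ∀ N (p : Σ m, ι (m + N)), ediam (t (p.1 + N) p.2) ≤ tail N ^ d⁻¹ := by
    rintro N ⟨m, i⟩
    rw [ENNReal.le_rpow_inv_iff hd]
    exact (ENNReal.le_tsum i).trans
      (ENNReal.le_tsum (f := fun m => ∑' i, ediam (t (m + N) i) ^ d) m)
  have hcover : ∀ N, limsup (fun n => ⋃ i, t n i) atTop ⊆
      ⋃ p : Σ m, ι (m + N), t (p.1 + N) p.2 := by
    intro N x hx
    simp only [limsup_eq_iInf_iSup_of_nat', iInf_eq_iInter, iSup_eq_iUnion, mem_iInter,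
      mem_iUnion] at hx
    obtain ⟨m, i, hi⟩ := hx N
    exact mem_iUnion.2 ⟨⟨m, i⟩, hi⟩
  have hμ := Measure.hausdorffMeasure_le_liminf_tsum (ι := fun N => Σ m, ι (m + N)) d
    (limsup (fun n => ⋃ i, t n i) atTop) (fun N => tail N ^ d⁻¹) hradius
    (fun N p => t (p.1 + N) p.2) (Eventually.of_forall hdiam) (Eventually.of_forall hcover)
  have hsigma : ∀ N, ∑' p : Σ m, ι (m + N), ediam (t (p.1 + N) p.2) ^ d = tail N := fun N =>
    ENNReal.tsum_sigma' _
  simpa only [hsigma, htail.liminf_eq, nonpos_iff_eq_zero] using hμ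

theorem AddCircle.exists_dist_le_norm_nsmul_div {p : ℝ} {m : ℕ} (hm : 0 < m) (x : AddCircle p) :
    ∃ j : Fin m, dist x ((j * p / m : ℝ) : AddCircle p) ≤ ‖m • x‖ / m := by
  obtain ⟨y, rfl⟩ := QuotientAddGroup.mk_surjective x
  set k : ℤ := round (p⁻¹ * (m * y))
  have hm' : (0 : ℝ) < m := Nat.cast_pos.2 hm
  have hmod : 0 ≤ k % m := Int.emod_nonneg k (by omega)
  have hj : (k % m).toNat < m := by
    have := Int.emod_lt_of_pos k (by omega : (0 : ℤ) < m)
    omega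
  refine ⟨⟨_, hj⟩, ?_⟩
  have hdecomp : (((k % m).toNat : ℕ) : ℝ) * p / m = k * p / m - (k / m : ℤ) * p := by
    have h := congrArg (fun z : ℤ => (z : ℝ)) (Int.emod_add_mul_ediv k m)
    have hcast : (((k % m).toNat : ℕ) : ℝ) = ((k % m : ℤ) : ℝ) := by
      rw [← Int.cast_natCast, Int.toNat_of_nonneg hmod]
    push_cast at h
    rw [hcast]
    field_simp
    linear_combination p * h
  have hnorm : ‖m • (y : AddCircle p)‖ = |m * y - k * p| := by
    rw [← AddCircle.coe_nsmul, nsmul_eq_mul, AddCircle.norm_eq]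
  have hperiod : ((((k / m : ℤ) : ℝ) * p : ℝ) : AddCircle p) = 0 :=
    (AddCircle.coe_eq_zero_iff p).2 ⟨k / m, zsmul_eq_mul _ _⟩
  calc dist (y : AddCircle p) (((((k % m).toNat : ℕ) : ℝ) * p / m : ℝ) : AddCircle p)
      = ‖((y - k * p / m : ℝ) : AddCircle p)‖ := by
        rw [dist_eq_norm, hdecomp, ← AddCircle.coe_sub, sub_sub_eq_add_sub, add_sub_right_comm,
          AddCircle.coe_add, hperiod, add_zero]
    _ ≤ |y - k * p / m| := QuotientAddGroup.norm_mk_le_norm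
    _ = ‖m • (y : AddCircle p)‖ / m := by
        rw [hnorm, ← abs_of_pos hm', ← abs_div, abs_of_pos hm']
        congr 1
        field_simp

theorem AddCircle.hausdorffMeasure_setOf_frequently_norm_nsmul_le {p : ℝ} {m : ℕ → ℕ}
    {ε : ℕ → ℝ} {d : ℝ} (hd : 0 < d) (hm : ∀ᶠ n in atTop, 0 < m n) (hε : ∀ n, 0 ≤ ε n)
    (hsum : Summable fun n => m n * (2 * ε n / m n) ^ d) :
    μH[d] {x : AddCircle p | ∃ᶠ n in atTop, ‖m n • x‖ ≤ ε n} = 0 := by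
  set t : ∀ n, Fin (m n) → Set (AddCircle p) := fun n j =>
    closedBall ((j * p / m n : ℝ) : AddCircle p) (ε n / m n)
  have hcover : {x : AddCircle p | ∃ᶠ n in atTop, ‖m n • x‖ ≤ ε n} ⊆
      limsup (fun n => ⋃ j, t n j) atTop := by
    intro x hx
    rw [mem_limsup_iff_frequently_mem]
    refine (hx.and_eventually hm).mono fun n ⟨hle, hpos⟩ => ?_
    obtain ⟨j, hj⟩ := exists_dist_le_norm_nsmul_div hpos x
    exact mem_iUnion.2 ⟨j, hj.trans (div_le_div_of_nonneg_right hle (Nat.cast_nonneg _))⟩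
  have hterm : ∀ n, ∑' j, ediam (t n j) ^ d ≤ ENNReal.ofReal (m n * (2 * ε n / m n) ^ d) := by
    intro n
    have hr : 0 ≤ ε n / m n := div_nonneg (hε n) (Nat.cast_nonneg _)
    have hball : ∀ j, ediam (t n j) ≤ ENNReal.ofReal (2 * ε n / m n) := fun j => by
      rw [show t n j = closedBall _ (ε n / m n) from rfl, mul_div_assoc 2 (ε n),
        ENNReal.ofReal_mul zero_le_two, ENNReal.ofReal_ofNat, ← closedEBall_ofReal hr]
      exact ediam_closedEBall_le
    calc ∑' j, ediam (t n j) ^ d ≤ ∑' _ : Fin (m n), ENNReal.ofReal (2 * ε n / m n) ^ d :=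
          ENNReal.tsum_le_tsum fun j => ENNReal.rpow_le_rpow (hball j) hd.le
      _ = ENNReal.ofReal (m n * (2 * ε n / m n) ^ d) := by
          rw [tsum_fintype, Finset.sum_const, Finset.card_univ, Fintype.card_fin, nsmul_eq_mul,
            ENNReal.ofReal_rpow_of_nonneg (mul_div_assoc 2 (ε n) _ ▸ by positivity) hd.le,
            ENNReal.ofReal_mul (Nat.cast_nonneg _), ENNReal.ofReal_natCast]
  refine measure_mono_null hcover (hausdorffMeasure_limsup_atTop_eq_zero hd t ?_)
  refine ne_top_of_le_ne_top ?_ (ENNReal.tsum_le_tsum hterm)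
  rw [← ENNReal.ofReal_tsum_of_nonneg (fun n => ?_) hsum]
  · exact ENNReal.ofReal_ne_top
  · have := hε n
    positivity

theorem dimH_le_of_forall_hausdorffMeasure_eq_zero {X : Type*} [EMetricSpace X]
    [MeasurableSpace X] [BorelSpace X] {s : Set X} {a : ℝ} (h : ∀ d, a < d → μH[d] s = 0) :
    dimH s ≤ ENNReal.ofReal a :=
  dimH_le fun d hd => le_of_not_gt fun hlt => by
    rw [← ENNReal.ofReal_coe_nnreal, ENNReal.ofReal_lt_ofReal_iff'] at hlt
    simp [h d hlt.1] at hd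

theorem double_iterate (n : ℕ) (x : AddCircle (1:ℝ)) : double^[n] x = 2 ^ n • x := by
  induction n with
  | zero => simp
  | succ n ih => rw [Function.iterate_succ_apply', ih, double, ← two_nsmul, smul_smul, pow_succ']

theorem dist_double_iterate_self (n : ℕ) (x : AddCircle (1:ℝ)) :
    dist (double^[n] x) x = ‖(2 ^ n - 1) • x‖ := by
  rw [double_iterate, dist_eq_norm, sub_nsmul _ Nat.one_le_two_pow, one_nsmul, sub_eq_add_neg]

theorem frequently_le_rpow_of_liminf_lt {D : ℕ → ℝ} {K : ℝ}
    (h : liminf (fun n : ℕ => (((1 / n : ℝ) * Real.logb 2 (D n) : ℝ) : EReal)) atTop <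
      ((-K : ℝ) : EReal)) :
    ∃ᶠ n in atTop, D n ≤ ((2 : ℝ) ^ (-K)) ^ n := by
  refine ((frequently_lt_of_liminf_lt (by isBoundedDefault) h).and_eventually
    (eventually_gt_atTop 0)).mono fun n ⟨hlt, hn⟩ => ?_
  rcases le_or_gt (D n) 0 with hD | hD
  · exact hD.trans (by positivity)
  have hlog : Real.logb 2 (D n) < -K * n := by
    rwa [EReal.coe_lt_coe_iff, one_div_mul_eq_div, div_lt_iff₀ (Nat.cast_pos.2 hn)] at hlt
  rw [← Real.rpow_natCast, ← Real.rpow_mul zero_le_two]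
  exact ((Real.logb_lt_iff_lt_rpow one_lt_two hD).1 hlog).le

theorem natCast_two_pow_sub_one_mul_rpow_le {σ d : ℝ} (hσ : 0 ≤ σ) (hd : 0 ≤ d) (n : ℕ) :
    ((2 ^ n - 1 : ℕ) : ℝ) * (2 * σ ^ n / (2 ^ n - 1 : ℕ)) ^ d ≤
      4 ^ d * (2 * (σ / 2) ^ d) ^ n := by
  rcases n.eq_zero_or_pos with rfl | hn
  · simp only [pow_zero, Nat.sub_self, Nat.cast_zero, zero_mul, mul_one]
    positivity
  set M : ℝ := ((2 ^ n - 1 : ℕ) : ℝ)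
  have hM : M = 2 ^ n - 1 := by simp [M, Nat.cast_sub Nat.one_le_two_pow]
  have htwo : (2 : ℝ) ≤ 2 ^ n := by simpa using pow_le_pow_right₀ one_le_two hn
  have hM0 : 0 < M := by linarith
  have hradius : 2 * σ ^ n / M ≤ 4 * (σ / 2) ^ n := by
    rw [div_pow, mul_div_assoc', div_le_div_iff₀ hM0 (by positivity)]
    nlinarith [pow_nonneg hσ n]
  calc M * (2 * σ ^ n / M) ^ d ≤ 2 ^ n * (4 * (σ / 2) ^ n) ^ d :=
        mul_le_mul (by linarith) (Real.rpow_le_rpow (by positivity) hradius hd) (by positivity)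
          (by positivity)
    _ = 4 ^ d * (2 * (σ / 2) ^ d) ^ n := by
        rw [Real.mul_rpow (by positivity) (by positivity), ← Real.rpow_pow_comm (by positivity),
          mul_pow]
        ring

theorem two_mul_rpow_div_two_rpow_lt_one {K d : ℝ} (h : 1 < (K + 1) * d) :
    2 * ((2 : ℝ) ^ (-K) / 2) ^ d < 1 := by
  rw [← Real.rpow_sub_one two_ne_zero, ← Real.rpow_mul zero_le_two,
    ← Real.rpow_one_add' zero_le_two]
  · exact Real.rpow_lt_one_of_one_lt_of_neg one_lt_two (by linarith)
  · linarith

noncomputable def returnExponent (x : AddCircle (1:ℝ)) : EReal :=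
  liminf (fun n : ℕ => (((1 / n : ℝ) * Real.logb 2 (dist (double^[n] x) x) : ℝ) : EReal)) atTop

theorem hausdorffMeasure_setOf_returnExponent_lt {K d : ℝ} (hK : -1 < K)
    (hd : 1 / (K + 1) < d) :
    μH[d] {x | returnExponent x < ((-K : ℝ) : EReal)} = 0 := by
  have hK1 : 0 < K + 1 := by linarith
  have hd0 : 0 < d := (one_div_pos.2 hK1).trans hd
  have hKd : 1 < (K + 1) * d := by rwa [div_lt_iff₀' hK1] at hd
  refine measure_mono_null (fun x hx => ?_)
    (AddCircle.hausdorffMeasure_setOf_frequently_norm_nsmul_le (m := fun n => 2 ^ n - 1)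
      (ε := fun n => ((2 : ℝ) ^ (-K)) ^ n) hd0 ?_ (fun n => by positivity) ?_)
  · simpa only [mem_ofPred_eq, dist_double_iterate_self] using frequently_le_rpow_of_liminf_lt hx
  · filter_upwards [eventually_ne_atTop 0] with n hn
    exact Nat.sub_pos_of_lt (Nat.one_lt_two_pow hn)
  · exact Summable.of_nonneg_of_le (fun n => by positivity)
      (natCast_two_pow_sub_one_mul_rpow_le (by positivity) hd0.le)
      ((summable_geometric_of_lt_one (by positivity)
        (two_mul_rpow_div_two_rpow_lt_one hKd)).mul_left _)

theorem stmt12 (K : ℝ) (hK : 0 < K) :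
    dimH {x : AddCircle (1:ℝ) |
        Filter.liminf
          (fun n : ℕ => (((1 / n : ℝ) * Real.logb 2 (dist (double^[n] x) x) : ℝ) : EReal))
          Filter.atTop < ((-K : ℝ) : EReal)} ≤ ENNReal.ofReal (1 / (K + 1)) ∧
    dimH {x : AddCircle (1:ℝ) |
        Filter.liminf
          (fun n : ℕ => (((1 / n : ℝ) * Real.logb 2 (dist (double^[n] x) x) : ℝ) : EReal))
          Filter.atTop = ⊥} = 0 := by
  refine ⟨dimH_le_of_forall_hausdorffMeasure_eq_zero fun d hd =>
    hausdorffMeasure_setOf_returnExponent_lt (by linarith) hd, ?_⟩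
  refine le_antisymm ?_ zero_le
  rw [← ENNReal.ofReal_zero]
  refine dimH_le_of_forall_hausdorffMeasure_eq_zero fun d hd => ?_
  have hlt : 1 / (d⁻¹ + 1) < d := by
    rw [div_lt_iff₀ (by positivity), mul_add, mul_inv_cancel₀ hd.ne']
    linarith
  refine measure_mono_null (fun x (hx : returnExponent x = ⊥) => ?_)
    (hausdorffMeasure_setOf_returnExponent_lt (by linarith [inv_pos.2 hd]) hlt)
  show returnExponent x < _
  rw [hx]
  exact EReal.bot_lt_coe _
end

section
/- Let ε ∈ (0, 1/2) and consider, for integers n, m ≥ 1, the set F^{n,m}(ε) of tuples (i₁ < i₂ < ... < i_k; j₁, ..., j_k) of positive integers with i_k = n, j_k = m, satisfying (i) i_{l+1} − i_l ≥ j_l for 1 ≤ l < k, (ii) k ≤ εn, (iii) n − ∑_{1≤l<k} j_l ≤ εn. Then there exist C > 0 and ε' > 0 with ε' → 0 as ε → 0, such that #F^{n,m}(ε) ≤ C·2^{ε'n} for all n, m ≥ 1. -/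
open Finset Real Filter

/-- The set `F^{n,m}(ε)` of tuples `(k, (i₁,…,i_k), (j₁,…,j_k))` of positive integers with
`i₁ < ⋯ < i_k = n`, `j_k = m`, spacings `i_{l+1} - i_l ≥ j_l`, `k ≤ εn`, and
`n - ∑_{l<k} j_l ≤ εn`. -/
def Fset (ε : ℝ) (n m : ℕ) : Set (Σ k : ℕ, (Fin k → ℕ) × (Fin k → ℕ)) :=
  { p | 1 ≤ p.1 ∧ StrictMono p.2.1 ∧ (∀ l, 0 < p.2.1 l) ∧ (∀ l, 0 < p.2.2 l) ∧
        (∀ l : Fin p.1, (l : ℕ) = p.1 - 1 → p.2.1 l = n ∧ p.2.2 l = m) ∧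
        (∀ l l' : Fin p.1, (l : ℕ) + 1 = (l' : ℕ) → p.2.2 l ≤ p.2.1 l' - p.2.1 l) ∧
        (p.1 : ℝ) ≤ ε * n ∧
        (n : ℝ) - ∑ l ∈ Finset.univ.filter (fun l : Fin p.1 => (l : ℕ) + 1 < p.1),
            (p.2.2 l : ℝ) ≤ ε * n }

namespace Stmt13Aux

/-- extension of the `j` sequence to all of `ℕ` by zero. -/
def jext (p : Σ k : ℕ, (Fin k → ℕ) × (Fin k → ℕ)) : ℕ → ℕ :=
  fun l => if h : l < p.1 then p.2.2 ⟨l, h⟩ else 0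

/-- partial sums of the `j` sequence. -/
def Q (p : Σ k : ℕ, (Fin k → ℕ) × (Fin k → ℕ)) : ℕ → ℕ :=
  fun t => ∑ l ∈ Finset.range (t + 1), jext p l

/-- The encoding of a tuple by the range of `i` and the partial sums of `j`. -/
def enc (p : Σ k : ℕ, (Fin k → ℕ) × (Fin k → ℕ)) : Finset ℕ × Finset ℕ :=
  (Finset.univ.image p.2.1, (Finset.range (p.1 - 1)).image (Q p))

lemma prefix_le {ε : ℝ} {n m : ℕ} {p : Σ k : ℕ, (Fin k → ℕ) × (Fin k → ℕ)}
    (hp : p ∈ Fset ε n m) : ∀ t, (ht : t < p.1) →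
    (∑ l ∈ Finset.range t, jext p l) + p.2.1 ⟨0, hp.1⟩ ≤ p.2.1 ⟨t, ht⟩ := by
  obtain ⟨hk, hi, hipos, hjpos, hlast, hstep, hkε, -⟩ := hp
  intro t
  induction t with
  | zero => intro ht; simp
  | succ t IH =>
    intro ht
    have ht' : t < p.1 := by omega
    rw [Finset.sum_range_succ]
    have h1 := IH ht'
    have h2 := hstep ⟨t, ht'⟩ ⟨t + 1, ht⟩ rfl
    have h3 : p.2.1 ⟨t, ht'⟩ < p.2.1 ⟨t + 1, ht⟩ := hi (by simp [Fin.lt_def])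
    have h4 : jext p t = p.2.2 ⟨t, ht'⟩ := dif_pos ht'
    omega

end Stmt13Aux

open Stmt13Aux in
theorem stmt13 :
    ∃ ε' : ℝ → ℝ, Filter.Tendsto ε' (nhdsWithin 0 (Set.Ioi 0)) (nhds 0) ∧
      ∀ ε : ℝ, 0 < ε → ε < 1/2 → 0 < ε' ε ∧ ∃ C > (0:ℝ), ∀ n m : ℕ, 1 ≤ n → 1 ≤ m →
        (Fset ε n m).Finite ∧ ((Fset ε n m).ncard : ℝ) ≤ C * (2:ℝ) ^ (ε' ε * n) := by
  use fun x => 2 * (x * Real.logb 2 x⁻¹ + Real.logb 2 (1 + x))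
  constructor
  · -- tendsto 0
    have hf : Tendsto (fun x : ℝ => x * Real.logb 2 x⁻¹) (nhdsWithin 0 (Set.Ioi 0)) (nhds 0) := by
      have h0 := tendsto_log_mul_rpow_nhdsGT_zero (r := 1) one_pos
      have h1 : Tendsto (fun x : ℝ => -(Real.log x * x ^ (1:ℝ)) / Real.log 2)
          (nhdsWithin 0 (Set.Ioi 0)) (nhds 0) := by
        simpa using h0.neg.div_const (Real.log 2)
      refine h1.congr (fun x => ?_)
      rw [Real.logb, Real.log_inv, Real.rpow_one]
      ring
    have hg : Tendsto (fun x : ℝ => Real.logb 2 (1 + x)) (nhdsWithin 0 (Set.Ioi 0)) (nhds 0) := by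
      have hc : ContinuousAt (fun x : ℝ => Real.logb 2 (1 + x)) 0 := by
        have h2 : ContinuousAt (fun x : ℝ => (1:ℝ) + x) 0 := by fun_prop
        exact ((Real.continuousAt_log (by norm_num)).comp h2).div_const _
      have h3 : Tendsto (fun x : ℝ => Real.logb 2 (1 + x)) (nhdsWithin 0 (Set.Ioi 0))
          (nhds (Real.logb 2 (1 + 0))) := hc.tendsto.mono_left nhdsWithin_le_nhds
      simpa using h3
    have := (hf.add hg).const_mul (2:ℝ)
    simpa using this
  intro ε hε hε2
  have hε1 : ε ≤ 1 := by linarith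
  have hinv1 : (1:ℝ) ≤ ε⁻¹ := (one_le_inv₀ hε).2 hε1
  have hlognn : 0 ≤ Real.logb 2 ε⁻¹ := Real.logb_nonneg one_lt_two hinv1
  constructor
  · -- positivity
    have h1 : 0 ≤ ε * Real.logb 2 ε⁻¹ := mul_nonneg hε.le hlognn
    have h2 : 0 < Real.logb 2 (1 + ε) := Real.logb_pos one_lt_two (by linarith)
    positivity
  refine ⟨1, one_pos, fun n m hn hm => ?_⟩
  set K := ⌊ε * n⌋₊ with hK
  set B : Finset (Finset ℕ) :=
    (Finset.Icc 1 n).powerset.filter (fun S => S.card ≤ K) with hB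
  have hKn : (K : ℝ) ≤ ε * n := Nat.floor_le (by positivity)
  have hKlen : K ≤ n := by
    have hn1 : (1:ℝ) ≤ (n:ℝ) := by exact_mod_cast hn
    have : (K : ℝ) ≤ (n : ℝ) := by nlinarith
    exact_mod_cast this
  -- the encoding maps into B ×ˢ B
  have hmaps : ∀ p ∈ Fset ε n m, enc p ∈ ((B ×ˢ B : Finset _) : Set (Finset ℕ × Finset ℕ)) := by
    intro p hp
    have hp' := hp
    obtain ⟨hk, hi, hipos, hjpos, hlast, hstep, hkε, -⟩ := hp'
    have hkK : p.1 ≤ K := Nat.le_floor hkε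
    have hlastlt : p.1 - 1 < p.1 := by omega
    have hin : ∀ l : Fin p.1, p.2.1 l ≤ n := by
      intro l
      have h5 := (hlast ⟨p.1 - 1, hlastlt⟩ rfl).1
      calc p.2.1 l ≤ p.2.1 ⟨p.1 - 1, hlastlt⟩ := by
            apply hi.monotone
            simp only [Fin.le_def]
            omega
        _ = n := h5
    simp only [enc, Finset.mem_coe, Finset.mem_product]
    constructor
    · rw [hB, Finset.mem_filter, Finset.mem_powerset]
      refine ⟨fun x hx => ?_, ?_⟩
      · obtain ⟨l, -, rfl⟩ := Finset.mem_image.1 hx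
        exact Finset.mem_Icc.2 ⟨hipos l, hin l⟩
      · rw [Finset.card_image_of_injective _ hi.injective]
        simpa using hkK
    · rw [hB, Finset.mem_filter, Finset.mem_powerset]
      refine ⟨fun x hx => ?_, ?_⟩
      · obtain ⟨t, htm, rfl⟩ := Finset.mem_image.1 hx
        rw [Finset.mem_range] at htm
        have ht1 : t + 1 < p.1 := by omega
        have hpre := prefix_le hp (t + 1) ht1
        have hQle : Q p t ≤ n := by
          have h6 := hin ⟨t + 1, ht1⟩
          have h7 := hipos ⟨0, hp.1⟩
          simp only [Q]
          omega
        have hQge : 1 ≤ Q p t := by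
          have h8 : jext p 0 ≤ Q p t :=
            Finset.single_le_sum (f := jext p) (fun l _ => Nat.zero_le _)
              (Finset.mem_range.2 (by omega))
          have h9 : jext p 0 = p.2.2 ⟨0, hp.1⟩ := dif_pos hp.1
          have h10 := hjpos ⟨0, hp.1⟩
          omega
        exact Finset.mem_Icc.2 ⟨hQge, hQle⟩
      · calc ((Finset.range (p.1 - 1)).image (Q p)).card ≤ p.1 - 1 := by
              simpa using Finset.card_image_le (f := Q p) (s := Finset.range (p.1 - 1))
          _ ≤ K := by omega
  -- the encoding is injective on Fset
  have hinj : Set.InjOn enc (Fset ε n m) := by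
    rintro ⟨k, i, j⟩ hp ⟨k', i', j'⟩ hp' heq
    obtain ⟨hk, hi, hipos, hjpos, hlast, hstep, -, -⟩ := hp
    obtain ⟨hk', hi', hipos', hjpos', hlast', hstep', -, -⟩ := hp'
    have h1 : Finset.univ.image i = Finset.univ.image i' := congrArg Prod.fst heq
    have hcard : k = k' := by
      have h3 := congrArg Finset.card h1
      rwa [Finset.card_image_of_injective _ hi.injective,
        Finset.card_image_of_injective _ hi'.injective, Finset.card_univ, Finset.card_univ,
        Fintype.card_fin, Fintype.card_fin] at h3
    subst hcard
    have h2 : (Finset.range (k - 1)).image (Q ⟨k, i, j⟩)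
        = (Finset.range (k - 1)).image (Q ⟨k, i', j'⟩) := congrArg Prod.snd heq
    have hScard : (Finset.univ.image i).card = k := by
      rw [Finset.card_image_of_injective _ hi.injective, Finset.card_univ, Fintype.card_fin]
    have hieq : i = i' := by
      have e1 := Finset.orderEmbOfFin_unique hScard
        (f := i) (fun x => Finset.mem_image_of_mem _ (Finset.mem_univ x)) hi
      have e2 := Finset.orderEmbOfFin_unique hScard
        (f := i') (fun x => h1 ▸ Finset.mem_image_of_mem _ (Finset.mem_univ x)) hi'
      rw [e1, e2]
    -- now recover j
    have hQstep : ∀ (jj : Fin k → ℕ) t, Q ⟨k, i, jj⟩ (t + 1)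
        = Q ⟨k, i, jj⟩ t + jext ⟨k, i, jj⟩ (t + 1) := by
      intro jj t
      simp [Q, Finset.sum_range_succ]
    -- strict monotonicity of partial sums with positive entries, as a map Fin (k-1) → ℕ
    have hfmono : ∀ (jj : Fin k → ℕ), (∀ l, 0 < jj l) →
        StrictMono (fun t : Fin (k - 1) => Q ⟨k, i, jj⟩ t.1) := by
      intro jj hjj
      intro a b hab
      simp only
      apply Finset.sum_lt_sum_of_subset (i := (a : ℕ) + 1)
      · intro x hx
        rw [Finset.mem_range] at hx ⊢
        have := Fin.lt_def.1 hab
        omega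
      · rw [Finset.mem_range]; have := Fin.lt_def.1 hab; omega
      · rw [Finset.mem_range]; omega
      · have hab' := Fin.lt_def.1 hab
        have hbk : (b : ℕ) < k - 1 := b.isLt
        have hlt : (a : ℕ) + 1 < k := by omega
        have : jext ⟨k, i, jj⟩ ((a : ℕ) + 1) = jj ⟨(a : ℕ) + 1, hlt⟩ := dif_pos hlt
        rw [this]; exact hjj _
      · intro x _ _; exact Nat.zero_le _
    have himgT : ∀ (jj : Fin k → ℕ),
        (Finset.range (k - 1)).image (Q ⟨k, i, jj⟩)
          = Finset.univ.image (fun t : Fin (k - 1) => Q ⟨k, i, jj⟩ t.1) := by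
      intro jj
      ext x
      simp only [Finset.mem_image, Finset.mem_range, Finset.mem_univ, true_and]
      constructor
      · rintro ⟨a, ha, rfl⟩; exact ⟨⟨a, ha⟩, rfl⟩
      · rintro ⟨⟨a, ha⟩, rfl⟩; exact ⟨a, ha, rfl⟩
    have hTcard : (Finset.univ.image (fun t : Fin (k - 1) => Q ⟨k, i, j⟩ t.1)).card = k - 1 := by
      rw [Finset.card_image_of_injective _ (hfmono j hjpos).injective, Finset.card_univ,
        Fintype.card_fin]
    have hT : Finset.univ.image (fun t : Fin (k - 1) => Q ⟨k, i, j⟩ t.1)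
        = Finset.univ.image (fun t : Fin (k - 1) => Q ⟨k, i, j'⟩ t.1) := by
      rw [← himgT, ← himgT]
      have := hieq ▸ h2
      exact this
    have hfeq : (fun t : Fin (k - 1) => Q ⟨k, i, j⟩ t.1)
        = (fun t : Fin (k - 1) => Q ⟨k, i, j'⟩ t.1) := by
      have e1 := Finset.orderEmbOfFin_unique hTcard
        (f := fun t : Fin (k - 1) => Q ⟨k, i, j⟩ t.1)
        (fun x => Finset.mem_image_of_mem _ (Finset.mem_univ x)) (hfmono j hjpos)
      have e2 := Finset.orderEmbOfFin_unique hTcard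
        (f := fun t : Fin (k - 1) => Q ⟨k, i, j'⟩ t.1)
        (fun x => hT ▸ Finset.mem_image_of_mem _ (Finset.mem_univ x)) (hfmono j' hjpos')
      rw [e1, e2]
    have hjx : ∀ l, l < k - 1 → jext ⟨k, i, j⟩ l = jext ⟨k, i, j'⟩ l := by
      intro l
      induction l with
      | zero =>
        intro h0
        have := congrFun hfeq ⟨0, h0⟩
        simpa [Q, Finset.sum_range_one] using this
      | succ l IH =>
        intro hl
        have hl' : l < k - 1 := by omega
        have e1 := congrFun hfeq ⟨l + 1, hl⟩
        have e2 := congrFun hfeq ⟨l, hl'⟩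
        simp only at e1 e2
        rw [hQstep j l, hQstep j' l] at e1
        omega
    have hjeq : j = j' := by
      funext l
      rcases l with ⟨l, hl⟩
      by_cases hlk : l = k - 1
      · exact ((hlast ⟨l, hl⟩ hlk).2).trans ((hlast' ⟨l, hl⟩ hlk).2).symm
      · have hl1 : l < k - 1 := by omega
        have e1 : j ⟨l, hl⟩ = jext ⟨k, i, j⟩ l := by
          simp only [jext]; rw [dif_pos hl]
        have e2 : j' ⟨l, hl⟩ = jext ⟨k, i, j'⟩ l := by
          simp only [jext]; rw [dif_pos hl]
        rw [e1, e2, hjx l hl1]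
    rw [hieq, hjeq]
  -- finiteness and counting
  have hfinT : ((B ×ˢ B : Finset _) : Set (Finset ℕ × Finset ℕ)).Finite := (B ×ˢ B).finite_toSet
  have hfin : (Fset ε n m).Finite :=
    Set.Finite.of_finite_image (hfinT.subset (Set.image_subset_iff.2 hmaps)) hinj
  refine ⟨hfin, ?_⟩
  have hcount : (Fset ε n m).ncard ≤ (B ×ˢ B).card := by
    have := Set.ncard_le_ncard_of_injOn enc hmaps hinj hfinT
    rwa [Set.ncard_coe_finset] at this
  have hBcard : B.card ≤ ∑ c ∈ Finset.range (K + 1), n.choose c := by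
    have hsub : B ⊆ (Finset.range (K + 1)).biUnion (fun c => (Finset.Icc 1 n).powersetCard c) := by
      intro S hS
      rw [hB, Finset.mem_filter, Finset.mem_powerset] at hS
      exact Finset.mem_biUnion.2 ⟨S.card, Finset.mem_range.2 (by omega),
        Finset.mem_powersetCard.2 ⟨hS.1, rfl⟩⟩
    calc B.card ≤ _ := Finset.card_le_card hsub
      _ ≤ ∑ c ∈ Finset.range (K + 1), ((Finset.Icc 1 n).powersetCard c).card :=
          Finset.card_biUnion_le
      _ = ∑ c ∈ Finset.range (K + 1), n.choose c := by
          refine Finset.sum_congr rfl fun c _ => ?_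
          rw [Finset.card_powersetCard, Nat.card_Icc]
          simp
  -- real-number estimate
  set h : ℝ := ε * Real.logb 2 ε⁻¹ + Real.logb 2 (1 + ε) with hh
  have hreal : ((∑ c ∈ Finset.range (K + 1), n.choose c : ℕ) : ℝ) ≤ (2:ℝ) ^ (h * n) := by
    push_cast
    have step1 : ∑ c ∈ Finset.range (K + 1), (n.choose c : ℝ)
        ≤ (∑ c ∈ Finset.range (n + 1), (n.choose c : ℝ) * ε ^ c) * ε⁻¹ ^ K := by
      rw [Finset.sum_mul]
      have hsub : Finset.range (K + 1) ⊆ Finset.range (n + 1) :=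
        Finset.range_subset_range.2 (by omega)
      refine le_trans ?_ (Finset.sum_le_sum_of_subset_of_nonneg hsub
        (fun c _ _ => by positivity))
      refine Finset.sum_le_sum fun c hc => ?_
      rw [Finset.mem_range] at hc
      have h2 : ε⁻¹ ^ c ≤ ε⁻¹ ^ K := pow_le_pow_right₀ hinv1 (by omega)
      calc (n.choose c : ℝ) = (n.choose c : ℝ) * ε ^ c * ε⁻¹ ^ c := by
            rw [mul_assoc, ← mul_pow, mul_inv_cancel₀ hε.ne', one_pow, mul_one]
        _ ≤ (n.choose c : ℝ) * ε ^ c * ε⁻¹ ^ K := by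
            apply mul_le_mul_of_nonneg_left h2 (by positivity)
    have step2 : ∑ c ∈ Finset.range (n + 1), (n.choose c : ℝ) * ε ^ c = (1 + ε) ^ n := by
      rw [add_comm (1:ℝ) ε, add_pow]
      refine Finset.sum_congr rfl fun c _ => ?_
      rw [one_pow]
      ring
    have step3 : ε⁻¹ ^ K ≤ (2:ℝ) ^ (ε * Real.logb 2 ε⁻¹ * n) := by
      have hb : (2:ℝ) ^ (Real.logb 2 ε⁻¹) = ε⁻¹ :=
        Real.rpow_logb two_pos (by norm_num) (by positivity)
      calc ε⁻¹ ^ K = ((2:ℝ) ^ (Real.logb 2 ε⁻¹)) ^ K := by rw [hb]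
        _ = (2:ℝ) ^ (Real.logb 2 ε⁻¹ * K) := by
            rw [← Real.rpow_natCast ((2:ℝ) ^ (Real.logb 2 ε⁻¹)) K,
              ← Real.rpow_mul (by norm_num)]
        _ ≤ (2:ℝ) ^ (ε * Real.logb 2 ε⁻¹ * n) := by
            apply Real.rpow_le_rpow_of_exponent_le one_le_two
            calc Real.logb 2 ε⁻¹ * K ≤ Real.logb 2 ε⁻¹ * (ε * n) :=
                  mul_le_mul_of_nonneg_left hKn hlognn
              _ = ε * Real.logb 2 ε⁻¹ * n := by ring
    have step4 : (1 + ε) ^ n = (2:ℝ) ^ (Real.logb 2 (1 + ε) * n) := by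
      have hb : (2:ℝ) ^ (Real.logb 2 (1 + ε)) = 1 + ε :=
        Real.rpow_logb two_pos (by norm_num) (by linarith)
      calc (1 + ε) ^ n = ((2:ℝ) ^ (Real.logb 2 (1 + ε))) ^ n := by rw [hb]
        _ = (2:ℝ) ^ (Real.logb 2 (1 + ε) * n) := by
            rw [← Real.rpow_natCast ((2:ℝ) ^ (Real.logb 2 (1 + ε))) n,
              ← Real.rpow_mul (by norm_num)]
    calc ∑ c ∈ Finset.range (K + 1), (n.choose c : ℝ)
        ≤ (∑ c ∈ Finset.range (n + 1), (n.choose c : ℝ) * ε ^ c) * ε⁻¹ ^ K := step1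
      _ = (1 + ε) ^ n * ε⁻¹ ^ K := by rw [step2]
      _ ≤ (2:ℝ) ^ (Real.logb 2 (1 + ε) * n) * (2:ℝ) ^ (ε * Real.logb 2 ε⁻¹ * n) := by
          rw [← step4]
          apply mul_le_mul_of_nonneg_left step3 (by positivity)
      _ = (2:ℝ) ^ (h * n) := by
          rw [← Real.rpow_add two_pos, hh]
          ring_nf
  -- put everything together
  have hBreal : (B.card : ℝ) ≤ (2:ℝ) ^ (h * n) := by
    refine le_trans ?_ hreal
    exact_mod_cast hBcard
  have hBnn : (0:ℝ) ≤ (B.card : ℝ) := by positivity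
  calc ((Fset ε n m).ncard : ℝ) ≤ ((B ×ˢ B).card : ℝ) := by exact_mod_cast hcount
    _ = (B.card : ℝ) * (B.card : ℝ) := by rw [Finset.card_product]; push_cast; ring
    _ ≤ (2:ℝ) ^ (h * n) * (2:ℝ) ^ (h * n) := mul_le_mul hBreal hBreal hBnn (by positivity)
    _ = 1 * (2:ℝ) ^ (2 * (ε * Real.logb 2 ε⁻¹ + Real.logb 2 (1 + ε)) * n) := by
        rw [← Real.rpow_add two_pos, one_mul, hh]
        ring_nf
end

section
/- Let b ∈ ℝ/ℤ and suppose there is K₀ > 0 with (1/n)∑_{i=1}^{n} log₂ d(T^i b, b) > −K₀ for all n ≥ 1, where T(x) = 2x mod 1. For ρ > 0, let p(ρ) be the maximal nonnegative integer p such that 2^{k+1}ρ < d(T^k b, b) for all 1 ≤ k ≤ p. Then there exist ρ₀ > 0 and C > 0 such that p(ρ) ≥ C log(1/ρ) for all ρ ∈ (0, ρ₀]. -/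
theorem stmt14 (b : AddCircle (1:ℝ)) (K₀ : ℝ) (hK₀ : 0 < K₀)
    (hpos : ∀ n : ℕ, 1 ≤ n → 0 < dist (double^[n] b) b)
    (hb : ∀ n : ℕ, 1 ≤ n →
      -K₀ < (1 / n : ℝ) * ∑ i ∈ Finset.Icc 1 n, Real.logb 2 (dist (double^[i] b) b)) :
    ∃ ρ₀ > (0:ℝ), ∃ C > (0:ℝ), ∀ ρ : ℝ, 0 < ρ → ρ ≤ ρ₀ → ∀ p : ℕ,
      (∀ k : ℕ, 1 ≤ k → k ≤ p → 2^(k+1) * ρ < dist (double^[k] b) b) →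
      ¬ (2^(p+2) * ρ < dist (double^[p+1] b) b) →
      C * Real.log (1/ρ) ≤ (p : ℝ) := by
  have hd1 : 0 < dist (double^[1] b) b := hpos 1 le_rfl
  have hlog2 : (0:ℝ) < Real.log 2 := Real.log_pos one_lt_two
  refine ⟨dist (double^[1] b) b / 8, by positivity,
    1 / (2 * (K₀ + 2) * Real.log 2), by positivity, ?_⟩
  intro ρ hρ hρ0 p hall hmax
  -- distances are at most 1/2
  have hhalf : ∀ i : ℕ, dist (double^[i] b) b ≤ 1 / 2 := by
    intro i
    have := AddCircle.norm_le_half_period (p := (1:ℝ)) (x := double^[i] b - b) one_ne_zero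
    simpa [dist_eq_norm] using this
  -- p ≥ 1
  have hp1 : 1 ≤ p := by
    by_contra h
    interval_cases p
    push_neg at hmax
    have h4 : dist (double^[1] b) b ≤ 2 ^ (0 + 2) * ρ := hmax
    norm_num at h4
    simp only [Function.iterate_one] at hd1 hρ0
    linarith
  -- bound the sum
  have hsum : ∑ i ∈ Finset.Icc 1 (p + 1), Real.logb 2 (dist (double^[i] b) b)
      ≤ 2 + Real.logb 2 ρ := by
    rw [Finset.sum_Icc_succ_top (by omega : 1 ≤ p + 1)]
    have h1 : ∑ i ∈ Finset.Icc 1 p, Real.logb 2 (dist (double^[i] b) b)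
        ≤ (Finset.Icc 1 p).card • (-1 : ℝ) := by
      apply Finset.sum_le_card_nsmul
      intro i hi
      simp only [Finset.mem_Icc] at hi
      have h2 := hpos i hi.1
      have : Real.logb 2 (dist (double^[i] b) b) ≤ Real.logb 2 (1/2) :=
        Real.logb_le_logb_of_le one_lt_two h2 (hhalf i)
      calc Real.logb 2 (dist (double^[i] b) b) ≤ Real.logb 2 (1/2) := this
        _ = -1 := by
          rw [one_div, Real.logb_inv, Real.logb_self_eq_one] <;> norm_num
    have h2 : Real.logb 2 (dist (double^[p+1] b) b) ≤ Real.logb 2 (2^(p+2) * ρ) := by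
      exact Real.logb_le_logb_of_le one_lt_two (hpos (p+1) (by omega)) (not_lt.mp hmax)
    have h3 : Real.logb 2 (2^(p+2) * ρ) = (p + 2 : ℝ) + Real.logb 2 ρ := by
      rw [Real.logb_mul (by positivity) (ne_of_gt hρ)]
      rw [Real.logb_pow, Real.logb_self_eq_one] <;> push_cast <;> norm_num
    have hcard : ((Finset.Icc 1 p).card : ℝ) = p := by
      rw [Nat.card_Icc]; push_cast; ring
    have := h1
    rw [nsmul_eq_mul, hcard] at this
    nlinarith
  have hbp := hb (p + 1) (by omega)
  set S := ∑ i ∈ Finset.Icc 1 (p + 1), Real.logb 2 (dist (double^[i] b) b) with hS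
  have hpn : (0:ℝ) < (p : ℝ) + 1 := by positivity
  have hkey : -K₀ * ((p:ℝ) + 1) < 2 + Real.logb 2 ρ := by
    push_cast at hbp
    have h2 : (1 / ((p:ℝ) + 1)) * S ≤ (1 / ((p:ℝ) + 1)) * (2 + Real.logb 2 ρ) :=
      mul_le_mul_of_nonneg_left hsum (by positivity)
    have h3 := lt_of_lt_of_le hbp h2
    rw [one_div, inv_mul_eq_div, lt_div_iff₀ hpn] at h3
    linarith
  -- logb 2 (1/ρ) < 2 (K₀+2) p
  have hlb : Real.logb 2 (1/ρ) < 2 * (K₀ + 2) * p := by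
    rw [one_div, Real.logb_inv]
    have hple : ((p:ℝ) + 1) ≤ 2 * p := by
      have : (1:ℝ) ≤ p := by exact_mod_cast hp1
      linarith
    nlinarith
  have hlogb : Real.logb 2 (1/ρ) = Real.log (1/ρ) / Real.log 2 := rfl
  rw [hlogb] at hlb
  rw [div_lt_iff₀ hlog2] at hlb
  rw [div_mul_eq_mul_div, one_mul, div_le_iff₀ (by positivity)]
  nlinarith
end
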